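/- arXiv:2403.11231 — 3 statements merged into one kernel-verified Lean document; each statement's English description precedes it below -/
import Mathlib

section
/- The complete homogeneous symmetric polynomial $\sum_{m}(X_1,\dots,X_{d+1}) = \sum_{a_1+\cdots+a_{d+1}=m} X_1^{a_1}\cdots X_{d+1}^{a_{d+1}}$ is an irreducible polynomial in $k[X_1,\dots,X_{d+1}]$ over an algebraically closed field $k$ of characteristic zero, provided $d+1 \ge 3$ and $m \ge 1$. -/
/-!
A factorisation `h_m = A * B` into non-units has homogeneous factors of positive degree, so `A`
and `B` both vanish at the origin. In at least three variables two such polynomials have a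
further common zero `x ≠ 0`: otherwise, by the Nullstellensatz, a minimal prime over `(A, B)`
would contain every `X i` and so have height at least three, against Krull's height theorem.
At `x` every partial derivative of `A * B` vanishes. But `h_m` has no singular point besides the
origin, which follows by induction on `m` from `∂ᵢ h_{r+1} = h_r + Xᵢ ∂ᵢ h_r` together with
Euler's identity `∑ Xᵢ ∂ᵢ h_r = r h_r`.
-/

open MvPolynomial

/-- The complete homogeneous symmetric polynomial of degree `m` in `n` variables:
`∑_{a₁+⋯+aₙ=m} X₁^{a₁} ⋯ Xₙ^{aₙ}`. -/
noncomputable def completeHomogeneous (k : Type*) [CommRing k] (n m : ℕ) :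
    MvPolynomial (Fin n) k :=
  ∑ a ∈ Finset.Nat.antidiagonalTuple n m, ∏ i, X i ^ a i

open Finset

theorem Finset.Nat.antidiagonalTuple_filter_ne_zero {n : ℕ} (i : Fin n) (r : ℕ) :
    {a ∈ antidiagonalTuple n (r + 1) | a i ≠ 0} =
      (antidiagonalTuple n r).map (addRightEmbedding (Pi.single i 1)) := by
  ext a
  simp only [mem_filter, Nat.mem_antidiagonalTuple, mem_map, addRightEmbedding_apply]
  constructor
  · rintro ⟨ha, hai⟩
    have hle : Pi.single i 1 ≤ a := by
      intro j; rcases eq_or_ne j i with rfl | hj <;> simp [*, Nat.one_le_iff_ne_zero]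
    refine ⟨a - Pi.single i 1, ?_, tsub_add_cancel_of_le hle⟩
    have := congrArg (∑ j, · j) (tsub_add_cancel_of_le hle)
    simp only [Pi.add_apply, sum_add_distrib, Fintype.sum_pi_single', ha] at this
    omega
  · rintro ⟨c, hc, rfl⟩
    simp [sum_add_distrib, hc]

namespace MvPolynomial

theorem pderiv_prod_X_pow_of_eq_zero {σ R : Type*} [Fintype σ] [CommRing R] {a : σ → ℕ}
    {i : σ} (hi : a i = 0) : pderiv i (∏ j, (X j : MvPolynomial σ R) ^ a j) = 0 := by
  have hmon : ∏ j, (X j : MvPolynomial σ R) ^ a j =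
      monomial (Finsupp.equivFunOnFinite.symm a) 1 := by
    rw [monomial_eq, Finsupp.prod_fintype _ _ fun _ => pow_zero _]
    simp
  simp [hmon, pderiv_monomial, hi]

section Homogeneous

variable {σ R : Type*} [CommRing R] {P Q : MvPolynomial σ R} {m n : ℕ}

theorem order_coe_le_degree {d : σ →₀ ℕ} (hd : d ∈ P.support) :
    (P : MvPowerSeries σ R).order ≤ d.degree :=
  MvPowerSeries.order_le (by rwa [coeff_coe, ← mem_support_iff])

theorem order_coe_le_totalDegree (hP : P ≠ 0) :
    (P : MvPowerSeries σ R).order ≤ P.totalDegree := by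
  obtain ⟨d, hd⟩ := support_nonempty.mpr hP
  exact (order_coe_le_degree hd).trans (by exact_mod_cast le_totalDegree hd)

theorem IsHomogeneous.order_coe (hP : P.IsHomogeneous n) (h0 : P ≠ 0) :
    (P : MvPowerSeries σ R).order = n :=
  le_antisymm (hP.totalDegree h0 ▸ order_coe_le_totalDegree h0)
    (MvPowerSeries.nat_le_order fun d hd => by rw [coeff_coe]; exact hP.coeff_eq_zero hd.ne)

theorem isHomogeneous_of_order_coe_eq_totalDegree
    (h : (P : MvPowerSeries σ R).order = P.totalDegree) : P.IsHomogeneous P.totalDegree := by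
  intro d hd
  have hlow := order_coe_le_degree (mem_support_iff.mpr hd)
  have hhigh := le_totalDegree (mem_support_iff.mpr hd)
  rw [h, Nat.cast_le] at hlow
  rw [Pi.one_def, ← Finsupp.degree_eq_weight_one]
  exact le_antisymm hhigh hlow

/-- Both the order (lowest degree) and the total degree are additive on products, and they agree
on the homogeneous product, so they agree on each factor. -/
theorem IsHomogeneous.of_mul_left [IsDomain R] (h : (P * Q).IsHomogeneous m) (hQ : Q ≠ 0) :
    P.IsHomogeneous P.totalDegree := by
  rcases eq_or_ne P 0 with rfl | hP
  · exact isHomogeneous_zero _ _ _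
  have hPQ := mul_ne_zero hP hQ
  have hsum : (P : MvPowerSeries σ R).order + (Q : MvPowerSeries σ R).order =
      P.totalDegree + Q.totalDegree := by
    rw [← MvPowerSeries.order_mul, ← coe_mul, h.order_coe hPQ, ← h.totalDegree hPQ,
      totalDegree_mul_of_isDomain hP hQ, Nat.cast_add]
  have hPle := order_coe_le_totalDegree hP
  have hQle := order_coe_le_totalDegree hQ
  apply isHomogeneous_of_order_coe_eq_totalDegree
  lift (P : MvPowerSeries σ R).order to ℕ using ne_top_of_le_ne_top (by simp) hPle with a
  lift (Q : MvPowerSeries σ R).order to ℕ using ne_top_of_le_ne_top (by simp) hQle with b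
  norm_cast at *
  omega

theorem IsHomogeneous.constantCoeff_eq_zero {k : Type*} [Field k] {P : MvPolynomial σ k}
    (hP : P.IsHomogeneous n) (hu : ¬IsUnit P) : constantCoeff P = 0 := by
  rw [constantCoeff_eq]
  rcases eq_or_ne n 0 with rfl | hn
  · have hC : P = C (coeff 0 P) :=
      totalDegree_eq_zero_iff_eq_C.mp ((totalDegree_zero_iff_isHomogeneous σ).mpr hP)
    by_contra hc
    exact hu (hC ▸ (isUnit_iff_ne_zero.mpr hc).map C)
  · exact hP.coeff_eq_zero (by simpa using hn.symm)

end Homogeneous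

section Height

variable {σ R : Type*} [CommRing R] [DecidableEq σ]

noncomputable def killVars (s : Finset σ) : MvPolynomial σ R →ₐ[R] MvPolynomial σ R :=
  aeval fun i => if i ∈ s then 0 else X i

theorem ker_killVars_le {s : Finset σ} {p : Ideal (MvPolynomial σ R)}
    (hs : ∀ i ∈ s, X i ∈ p) : RingHom.ker (killVars s) ≤ p := by
  intro f hf
  have hcomp : (Ideal.Quotient.mkₐ R p).comp (killVars s) = Ideal.Quotient.mkₐ R p := by
    refine algHom_ext fun i => ?_
    by_cases hi : i ∈ s
    · simpa [killVars, hi, eq_comm (a := (0 : _ ⧸ p)), Ideal.Quotient.eq_zero_iff_mem]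
        using hs i hi
    · simp [killVars, hi]
  rw [← Ideal.Quotient.eq_zero_iff_mem, ← Ideal.Quotient.mkₐ_eq_mk R, ← hcomp]
  simp [RingHom.mem_ker.mp hf]

theorem X_mem_ker_killVars {s : Finset σ} {i : σ} (hi : i ∈ s) :
    X i ∈ RingHom.ker (killVars (R := R) s) := by
  simp [killVars, hi]

theorem X_notMem_ker_killVars [Nontrivial R] {s : Finset σ} {i : σ} (hi : i ∉ s) :
    X i ∉ RingHom.ker (killVars (R := R) s) := by
  simp [killVars, hi]

variable [IsDomain R]

instance (s : Finset σ) : (RingHom.ker (killVars (R := R) s)).IsPrime := RingHom.ker_isPrime _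

theorem card_le_height_ker_killVars (s : Finset σ) :
    (#s : ℕ∞) ≤ (RingHom.ker (killVars (R := R) s)).height := by
  induction s using Finset.induction_on with
  | empty => simp
  | insert i s hi ih =>
    have hlt : RingHom.ker (killVars (R := R) s) < RingHom.ker (killVars (insert i s)) :=
      lt_of_le_of_ne (ker_killVars_le fun j hj => X_mem_ker_killVars (mem_insert_of_mem hj))
        fun h => X_notMem_ker_killVars hi (h ▸ X_mem_ker_killVars (mem_insert_self i s))
    rw [card_insert_of_notMem hi, Nat.cast_succ]
    exact (add_le_add_left ih 1).trans (Ideal.height_add_one_le_of_lt_of_isPrime hlt)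

theorem card_le_height_of_forall_X_mem (s : Finset σ) {p : Ideal (MvPolynomial σ R)}
    (hs : ∀ i ∈ s, X i ∈ p) : (#s : ℕ∞) ≤ p.height :=
  (card_le_height_ker_killVars s).trans (Ideal.height_mono (ker_killVars_le hs))

end Height

theorem exists_ne_zero_forall_eval_eq_zero {σ k : Type*} [Fintype σ] [Field k] [IsAlgClosed k]
    {s : Finset (MvPolynomial σ k)} (hs : #s < Fintype.card σ) (h0 : ∀ f ∈ s, eval 0 f = 0) :
    ∃ x ≠ 0, ∀ f ∈ s, eval x f = 0 := by
  classical
  by_contra! hno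
  have : (RingHom.ker (eval (0 : σ → k))).IsPrime := RingHom.ker_isPrime _
  obtain ⟨p, hp, -⟩ := Ideal.exists_minimalPrimes_le (J := RingHom.ker (eval 0))
    (Ideal.span_le.mpr h0)
  have hX : ∀ i, X i ∈ p := by
    intro i
    refine (hp.1.1.radical_le_iff.mpr hp.1.2) ?_
    rw [← vanishingIdeal_zeroLocus_eq_radical (K := k), mem_vanishingIdeal_iff]
    intro x hx
    by_contra hxi
    obtain ⟨f, hf, hfx⟩ := hno x (ne_of_apply_ne (· i) (by simpa using hxi))
    exact hfx (mem_zeroLocus_iff.mp hx f (Ideal.subset_span hf))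
  have hle : (#(univ : Finset σ) : ℕ∞) ≤ #s :=
    (card_le_height_of_forall_X_mem _ fun i _ => hX i).trans
      (Ideal.height_le_card_of_mem_minimalPrimes_span_finset hp)
  exact absurd (by exact_mod_cast hle) hs.not_ge

end MvPolynomial

section CommRing

variable {k : Type*} [CommRing k] {n : ℕ}

theorem completeHomogeneous_zero : completeHomogeneous k n 0 = 1 := by
  simp [completeHomogeneous, Nat.antidiagonalTuple_zero_right]

theorem isHomogeneous_completeHomogeneous (m : ℕ) :
    (completeHomogeneous k n m).IsHomogeneous m := by
  refine IsHomogeneous.sum _ _ _ fun a ha => ?_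
  rw [← (Nat.mem_antidiagonalTuple.mp ha)]
  exact IsHomogeneous.prod _ _ _ fun i _ => isHomogeneous_X_pow i (a i)

theorem completeHomogeneous_succ (i : Fin n) (r : ℕ) :
    completeHomogeneous k n (r + 1) = X i * completeHomogeneous k n r +
      ∑ a ∈ Nat.antidiagonalTuple n (r + 1) with a i = 0, ∏ j, X j ^ a j := by
  rw [completeHomogeneous, ← sum_filter_not_add_sum_filter _ fun a => a i = 0]
  congr 1
  rw [Nat.antidiagonalTuple_filter_ne_zero, sum_map, completeHomogeneous, mul_sum]
  refine sum_congr rfl fun c _ => ?_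
  rw [mul_comm]
  simp only [addRightEmbedding_apply, Pi.add_apply, pow_add, prod_mul_distrib]
  congr 1
  rw [Fintype.prod_eq_single i fun j hj => by rw [Pi.single_eq_of_ne hj, pow_zero],
    Pi.single_eq_same, pow_one]

theorem pderiv_completeHomogeneous_succ (i : Fin n) (r : ℕ) :
    pderiv i (completeHomogeneous k n (r + 1)) =
      completeHomogeneous k n r + X i * pderiv i (completeHomogeneous k n r) := by
  rw [completeHomogeneous_succ i r, map_add, Derivation.leibniz, pderiv_X_self, map_sum,
    sum_eq_zero fun a ha => pderiv_prod_X_pow_of_eq_zero (mem_filter.mp ha).2]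
  simp [add_comm]

end CommRing

section Field

variable {k : Type*} [Field k] [CharZero k] {n : ℕ}

theorem completeHomogeneous_ne_zero (m : ℕ) : completeHomogeneous k (n + 1) m ≠ 0 := by
  intro h
  have hcard := congrArg (eval 1) h
  simp only [completeHomogeneous, map_sum, map_prod, map_pow, eval_X, Pi.one_apply, one_pow,
    prod_const_one, sum_const, nsmul_one, map_zero, Nat.cast_eq_zero, card_eq_zero] at hcard
  have : Pi.single 0 m ∈ Nat.antidiagonalTuple (n + 1) m := by simp [Nat.mem_antidiagonalTuple]
  simp [hcard] at this

/-- The hypothesis only at the nonzero coordinates of `x` is what makes the induction go through: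
summing `∂ᵢ h_{r+2} = h_{r+1} + Xᵢ ∂ᵢ h_{r+1}` over them and using Euler's identity gives
`(#{i | xᵢ ≠ 0} + r + 1) h_{r+1}(x) = 0`. -/
theorem eq_zero_of_eval_pderiv_completeHomogeneous_eq_zero (r : ℕ) (x : Fin n → k)
    (hx : ∀ i, x i ≠ 0 → eval x (pderiv i (completeHomogeneous k n (r + 1))) = 0) : x = 0 := by
  induction r with
  | zero =>
    funext i
    by_contra hxi
    simpa [pderiv_completeHomogeneous_succ, completeHomogeneous_zero] using hx i hxi
  | succ r ih =>
    set v := eval x (completeHomogeneous k n (r + 1))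
    set D := fun i => eval x (pderiv i (completeHomogeneous k n (r + 1)))
    have hrec : ∀ i, eval x (pderiv i (completeHomogeneous k n (r + 2))) = v + x i * D i := by
      simp [pderiv_completeHomogeneous_succ, v, D]
    have heuler : ∑ i, x i * D i = (r + 1) * v := by
      have := (isHomogeneous_completeHomogeneous (k := k) (n := n) (r + 1)).sum_X_mul_pderiv
      simpa [D, v] using congrArg (eval x) this
    have hv : v = 0 := by
      classical
      set S : Finset (Fin n) := {i | x i ≠ 0}
      have : (#S + (r + 1) : k) * v = 0 := calc
        (#S + (r + 1) : k) * v = ∑ i ∈ S, (v + x i * D i) := by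
          rw [sum_add_distrib, sum_filter_of_ne (f := fun i => x i * D i)
            fun i _ h => left_ne_zero_of_mul h, heuler]
          simp [add_mul]
        _ = 0 := sum_eq_zero fun i hi => hrec i ▸ hx i (mem_filter.mp hi).2
      exact (mul_eq_zero.mp this).resolve_left (by norm_cast)
    refine ih fun i hi => (mul_eq_zero.mp ?_).resolve_left hi
    simpa [hrec, hv] using hx i hi

end Field

/-- Over an algebraically closed field of characteristic zero, the complete homogeneous
symmetric polynomial `h_m(X₁, …, X_{d+1})` is irreducible in `k[X₁, …, X_{d+1}]`, provided
`d + 1 ≥ 3` and `m ≥ 1`. -/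
theorem completeHomogeneous_irreducible {k : Type*} [Field k] [IsAlgClosed k] [CharZero k]
    (d m : ℕ) (hd : 3 ≤ d + 1) (hm : 1 ≤ m) :
    Irreducible (completeHomogeneous k (d + 1) m) := by
  classical
  obtain ⟨r, rfl⟩ := Nat.exists_eq_add_of_le' hm
  have hh := isHomogeneous_completeHomogeneous (k := k) (n := d + 1) (r + 1)
  have hne := completeHomogeneous_ne_zero (k := k) (n := d) (r + 1)
  refine ⟨fun hu => (hu.map (eval 0)).ne_zero ?_, fun A B hAB => ?_⟩
  · rw [eval_zero, constantCoeff_eq]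
    exact hh.coeff_eq_zero (by simp)
  by_contra! hAB'
  rw [hAB] at hh hne
  have hA0 := (hh.of_mul_left (right_ne_zero_of_mul hne)).constantCoeff_eq_zero hAB'.1
  have hB0 :=
    ((mul_comm A B ▸ hh).of_mul_left (left_ne_zero_of_mul hne)).constantCoeff_eq_zero hAB'.2
  obtain ⟨x, hx, hxAB⟩ := exists_ne_zero_forall_eval_eq_zero (s := {A, B})
    (card_le_two.trans_lt (by simp; omega)) (by simpa using ⟨hA0, hB0⟩)
  refine hx (eq_zero_of_eval_pderiv_completeHomogeneous_eq_zero r x fun i _ => ?_)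
  simp [hAB, Derivation.leibniz, hxAB A (by simp), hxAB B (by simp)]
end

section
/- Let $k$ be an algebraically closed field of characteristic zero and $d \ge 2$. Suppose $(T'+\alpha X_d)^{d-1}(T'+\beta X_d) = S(T',X_d,X_{d+1}) + a\,h_d(X_d,X_{d+1})$ in $k[T',X_d,X_{d+1}]$, where $S$ is symmetric under swapping $X_d \leftrightarrow X_{d+1}$, $h_d$ is the complete homogeneous symmetric polynomial of degree $d$ in two variables, and $a \in k$. If the left-hand side is independent of $X_{d+1}$ (as written) and the equation holds identically, then $\alpha = \beta = 0$. -/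
open MvPolynomial

/-!
Evaluating at the points `(t, 1, 0)` and `(t, 0, 1)`, which the swap exchanges, kills the
symmetric part and leaves the one-variable identity `(t + α)^(d-1) (t + β) = t^d`, since
`h_d` takes the value `1` at both points. For `d ≥ 2` the left side vanishes at `t = -α`
and at `t = -β`, so `(-α)^d = (-β)^d = 0`.
-/

section

variable {R : Type*}

theorem sum_range_zero_pow_sub [Semiring R] (d : ℕ) :
    ∑ i ∈ Finset.range (d + 1), (0 : R) ^ (d - i) = 1 := by
  simpa [zero_geom_sum] using Finset.sum_range_reflect (fun i ↦ (0 : R) ^ i) (d + 1)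

theorem MvPolynomial.eval_comp_swap_of_rename_swap_eq {σ : Type*} [CommSemiring R]
    [DecidableEq σ] {f : MvPolynomial σ R} {i j : σ}
    (h : rename (Equiv.swap i j) f = f) (x : σ → R) :
    eval (x ∘ Equiv.swap i j) f = eval x f := by
  rw [← eval_rename, h]

theorem linear_pow_mul_linear_eq_pow_of_swap_symmetric [CommRing R] {d : ℕ} (hd : d ≠ 0)
    (α β a : R)
    (hsym : rename (Equiv.swap (1 : Fin 3) 2)
        ((X 0 + C α * X 1) ^ (d - 1) * (X 0 + C β * X 1) -
          C a * ∑ i ∈ Finset.range (d + 1), X 1 ^ i * X 2 ^ (d - i)) =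
      (X 0 + C α * X 1) ^ (d - 1) * (X 0 + C β * X 1) -
        C a * ∑ i ∈ Finset.range (d + 1), X 1 ^ i * X 2 ^ (d - i)) (t : R) :
    (t + α) ^ (d - 1) * (t + β) = t ^ d := by
  have h := eval_comp_swap_of_rename_swap_eq hsym ![t, 1, 0]
  have hswap : (![t, 1, 0] : Fin 3 → R) ∘ Equiv.swap 1 2 = ![t, 0, 1] := by
    ext i; fin_cases i <;> rfl
  rw [hswap] at h
  simp only [map_sub, map_mul, map_pow, map_add, map_sum, eval_X, eval_C, Matrix.cons_val,
    Matrix.cons_val_zero, Matrix.cons_val_one, one_pow, one_mul, mul_one, mul_zero, add_zero,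
    zero_geom_sum, Nat.add_eq_zero_iff, one_ne_zero, and_false, ↓reduceIte,
    sum_range_zero_pow_sub, ← pow_succ, Nat.sub_add_cancel (Nat.one_le_iff_ne_zero.mpr hd)] at h
  linear_combination -h

end

theorem swap_symmetric_forces_zero_general {k : Type*} [Field k]
    (d : ℕ) (hd : 2 ≤ d) (α β a : k)
    (hsym : rename (Equiv.swap (1 : Fin 3) 2)
        ((X 0 + C α * X 1) ^ (d - 1) * (X 0 + C β * X 1) -
          C a * ∑ i ∈ Finset.range (d + 1), X 1 ^ i * X 2 ^ (d - i)) =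
      (X 0 + C α * X 1) ^ (d - 1) * (X 0 + C β * X 1) -
        C a * ∑ i ∈ Finset.range (d + 1), X 1 ^ i * X 2 ^ (d - i)) :
    α = 0 ∧ β = 0 := by
  have hd1 : d - 1 ≠ 0 := by omega
  have at_neg_α := linear_pow_mul_linear_eq_pow_of_swap_symmetric (by omega) α β a hsym (-α)
  have at_neg_β := linear_pow_mul_linear_eq_pow_of_swap_symmetric (by omega) α β a hsym (-β)
  simp only [neg_add_cancel, zero_pow hd1, zero_mul, mul_zero] at at_neg_α at_neg_β
  exact ⟨neg_eq_zero.mp (eq_zero_of_pow_eq_zero at_neg_α.symm),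
    neg_eq_zero.mp (eq_zero_of_pow_eq_zero at_neg_β.symm)⟩

/-- Let `k` be an algebraically closed field of characteristic zero and `d ≥ 2`. Working
in `k[T', X_d, X_{d+1}]` (variables indexed `0, 1, 2`): if
`(T' + αX_d)^{d-1}(T' + βX_d) - a·h_d(X_d, X_{d+1})` is symmetric under the swap
`X_d ↔ X_{d+1}`, then `α = β = 0`. -/
theorem swap_symmetric_forces_zero {k : Type*} [Field k] [IsAlgClosed k] [CharZero k]
    (d : ℕ) (hd : 2 ≤ d) (α β a : k)
    (hsym : rename (Equiv.swap (1 : Fin 3) 2)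
        ((X 0 + C α * X 1) ^ (d - 1) * (X 0 + C β * X 1) -
          C a * ∑ i ∈ Finset.range (d + 1), X 1 ^ i * X 2 ^ (d - i)) =
      (X 0 + C α * X 1) ^ (d - 1) * (X 0 + C β * X 1) -
        C a * ∑ i ∈ Finset.range (d + 1), X 1 ^ i * X 2 ^ (d - i)) :
    α = 0 ∧ β = 0 :=
  swap_symmetric_forces_zero_general d hd α β a hsym
end

section
/- Let $k$ be a field of characteristic zero, $d \ge 2$, and suppose $E(T,X_1,\dots,X_d) - f\,h_{d+1}(X_1,\dots,X_d) = \prod_{i=1}^{d}\bigl(T+m_1(X_1+\cdots+\widehat{X_i}+\cdots+X_d)+m_2X_i\bigr)\bigl(T+g(X_1+\cdots+X_d)\bigr)$, and that there is an identity, after setting $X_1=\cdots=X_{d-1}=0$ and substituting $T = T' + \gamma X_d$, of the form $(T'+(m_1+\gamma)X_d)^{d-1}(T'+(g+\gamma)X_d) = S(T',X_d,X_{d+1}) + a\,h_d(X_d,X_{d+1})$ with $S$ symmetric in $X_d,X_{d+1}$ and $a \in k$. Then $m_1 = g = -\gamma$. -/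
open MvPolynomial

/-!
Since `h_d(X_d, X_{d+1})` and `S` are symmetric, the identity forces
`P = (T' + αX_d)^{d-1} (T' + βX_d)` to be symmetric under `X_d ↔ X_{d+1}`.
Specialising `T' = 1, X_d = t, X_{d+1} = 0` in `P = swap P`, where the right side
becomes `1`, gives `(1 + αt)^{d-1} (1 + βt) = 1` in `k[t]`, so both factors are units of `k[t]`,
which forces `α = β = 0`.
-/

namespace Polynomial

variable {R : Type*} [CommRing R] [IsReduced R]

theorem eq_zero_of_isUnit_one_add_C_mul_X {c : R} (h : IsUnit (1 + C c * X)) : c = 0 := by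
  rw [← C_1, mul_comm, isUnit_C_add_X_mul_iff, isNilpotent_C_iff] at h
  exact h.2.eq_zero

theorem eq_zero_of_one_add_C_mul_X_pow_mul_eq_one {α β : R} {n : ℕ} (hn : n ≠ 0)
    (h : (1 + C α * X) ^ n * (1 + C β * X) = 1) : α = 0 ∧ β = 0 :=
  ⟨eq_zero_of_isUnit_one_add_C_mul_X ((isUnit_pow_iff hn).mp (.of_mul_eq_one _ h)),
    eq_zero_of_isUnit_one_add_C_mul_X (.of_mul_eq_one _ ((mul_comm _ _).trans h))⟩

end Polynomial

theorem MvPolynomial.one_add_C_mul_X_pow_mul_eq_one_of_rename_swap_eq {R : Type*} [CommRing R]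
    {α β : R} {n : ℕ}
    (h : rename (Equiv.swap (1 : Fin 3) 2) ((X 0 + C α * X 1) ^ n * (X 0 + C β * X 1)) =
      (X 0 + C α * X 1) ^ n * (X 0 + C β * X 1)) :
    (1 + Polynomial.C α * Polynomial.X) ^ n * (1 + Polynomial.C β * Polynomial.X) = 1 := by
  have := congrArg (aeval (![1, Polynomial.X, 0] : Fin 3 → Polynomial R)) h
  simpa [Equiv.swap_apply_of_ne_of_ne] using this.symm

theorem m1_eq_g_eq_neg_gamma_general {k : Type*} [Field k]
    (d : ℕ) (hd : 2 ≤ d) (m₁ g γ a : k)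
    (S : MvPolynomial (Fin 3) k)
    (hSsym : rename (Equiv.swap (1 : Fin 3) 2) S = S)
    (hid : ((X 0 + C (m₁ + γ) * X 1) ^ (d - 1) * (X 0 + C (g + γ) * X 1) :
        MvPolynomial (Fin 3) k) =
      S + C a * ∑ i ∈ Finset.range (d + 1), X 1 ^ i * X 2 ^ (d - i)) :
    m₁ = -γ ∧ g = -γ := by
  have hsym : rename (Equiv.swap (1 : Fin 3) 2)
      (∑ i ∈ Finset.range (d + 1), X 1 ^ i * X 2 ^ (d - i) : MvPolynomial (Fin 3) k) =
      ∑ i ∈ Finset.range (d + 1), X 1 ^ i * X 2 ^ (d - i) := by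
    simpa using (geom_sum₂_comm (X 2 : MvPolynomial (Fin 3) k) (X 1) (d + 1))
  have hPsym : rename (Equiv.swap (1 : Fin 3) 2)
      ((X 0 + C (m₁ + γ) * X 1) ^ (d - 1) * (X 0 + C (g + γ) * X 1)) =
      (X 0 + C (m₁ + γ) * X 1) ^ (d - 1) * (X 0 + C (g + γ) * X 1) := by
    rw [hid, map_add, map_mul, rename_C, hSsym, hsym]
  have hαβ := Polynomial.eq_zero_of_one_add_C_mul_X_pow_mul_eq_one (by omega)
    (one_add_C_mul_X_pow_mul_eq_one_of_rename_swap_eq hPsym)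
  exact ⟨eq_neg_of_add_eq_zero_left hαβ.1, eq_neg_of_add_eq_zero_left hαβ.2⟩

/-- Let `k` be a field of characteristic zero and `d ≥ 2`.  Suppose
`E - f·h_{d+1}(X₁, …, X_d) = ∏ᵢ (T + m₁ ∑_{j≠i} Xⱼ + m₂Xᵢ) · (T + g(X₁+⋯+X_d))` in
`k[T, X₁, …, X_d]`, and that after setting `X₁ = ⋯ = X_{d-1} = 0` and `T = T' + γX_d`
there is an identity `(T' + (m₁+γ)X_d)^{d-1}(T' + (g+γ)X_d) = S + a·h_d(X_d, X_{d+1})`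
with `S` symmetric in `X_d, X_{d+1}`.  Then `m₁ = g = -γ`. -/
theorem m1_eq_g_eq_neg_gamma {k : Type*} [Field k] [CharZero k]
    (d : ℕ) (hd : 2 ≤ d) (m₁ m₂ g γ f a : k)
    (E : MvPolynomial (Unit ⊕ Fin d) k)
    (hE : E - C f * ∑ b ∈ Finset.Nat.antidiagonalTuple d (d + 1),
        ∏ j, X (Sum.inr j) ^ b j =
      (∏ i, (X (Sum.inl ()) + C m₁ * ∑ j ∈ Finset.univ \ {i}, X (Sum.inr j) +
          C m₂ * X (Sum.inr i))) *
        (X (Sum.inl ()) + C g * ∑ j, X (Sum.inr j)))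
    (S : MvPolynomial (Fin 3) k)
    (hSsym : rename (Equiv.swap (1 : Fin 3) 2) S = S)
    (hid : ((X 0 + C (m₁ + γ) * X 1) ^ (d - 1) * (X 0 + C (g + γ) * X 1) :
        MvPolynomial (Fin 3) k) =
      S + C a * ∑ i ∈ Finset.range (d + 1), X 1 ^ i * X 2 ^ (d - i)) :
    m₁ = -γ ∧ g = -γ :=
  m1_eq_g_eq_neg_gamma_general d hd m₁ g γ a S hSsym hid
end
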